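/- arXiv:1104.4324 — 3 statements merged into one kernel-verified Lean document; each statement's English description precedes it below -/
import Mathlib

section
/- For a real quota q > 2, the Euler characteristic of the LogPrime quota complex satisfies χ(LogPrime(q)) = −∑_{2 ≤ n < e^q} μ(n). Combinatorially: ∑_{j≥0} (−1)^j c_j = −∑_{2 ≤ n < e^q} μ(n), where c_j is the number of (j+1)-element sets S of primes with ∑_{p∈S} ln(p) < q. -/
open ArithmeticFunction
open scoped ArithmeticFunction.Moebius

open Finset

/-!
A set `S` of primes is a face of `LogPrime(q)` iff `n = ∏_{p ∈ S} p < e^q`, and `S ↦ n` is a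
bijection onto the squarefree numbers, with `μ(n) = (-1)^|S|`. Grouping the squarefree
`n ∈ [2, e^q)` by their number of prime factors turns `-∑ μ(n)` into the alternating face count.
-/

namespace Nat

theorem squarefree_prod_of_forall_prime {s : Finset ℕ} (hs : ∀ p ∈ s, p.Prime) :
    Squarefree (∏ p ∈ s, p) :=
  squarefree_prod_of_pairwise_isCoprime
    (fun p hp q hq hpq ↦ Nat.coprime_iff_isRelPrime.mp
      ((Nat.coprime_primes (hs p hp) (hs q hq)).mpr hpq))
    fun p hp ↦ (hs p hp).squarefree

theorem ncard_setOf_forall_prime (P : ℕ → Prop) :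
    {S : Finset ℕ | (∀ p ∈ S, p.Prime) ∧ P (∏ p ∈ S, p)}.ncard =
      {n : ℕ | Squarefree n ∧ P n}.ncard := by
  have himage : primeFactors '' {n | Squarefree n ∧ P n} =
      {S : Finset ℕ | (∀ p ∈ S, p.Prime) ∧ P (∏ p ∈ S, p)} := by
    ext S
    constructor
    · rintro ⟨n, ⟨hn, hP⟩, rfl⟩
      exact ⟨fun p hp ↦ prime_of_mem_primeFactors hp,
        by rwa [prod_primeFactors_of_squarefree hn]⟩
    · rintro ⟨hS, hP⟩
      exact ⟨∏ p ∈ S, p, ⟨squarefree_prod_of_forall_prime hS, hP⟩, primeFactors_prod hS⟩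
  have hinj : Set.InjOn primeFactors {n | Squarefree n ∧ P n} := fun m hm n hn hmn ↦ by
    rw [← prod_primeFactors_of_squarefree hm.1, hmn, prod_primeFactors_of_squarefree hn.1]
  rw [← himage, hinj.ncard_image]

theorem moebius_eq_neg_one_pow_card_primeFactors {n : ℕ} (hn : Squarefree n) :
    μ n = (-1) ^ #n.primeFactors := by
  rw [moebius_apply_of_squarefree hn,
    ← (cardDistinctFactors_eq_cardFactors_iff_squarefree hn.ne_zero).mpr hn,
    cardDistinctFactors_apply, ← List.card_toFinset]
  rfl

end Nat

theorem Real.sum_log_lt_iff_prod_lt_exp {S : Finset ℕ} (hS : ∀ p ∈ S, p.Prime) (q : ℝ) :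
    ∑ p ∈ S, Real.log p < q ↔ ((∏ p ∈ S, p : ℕ) : ℝ) < Real.exp q := by
  have hpos : ∀ p ∈ S, (p : ℝ) ≠ 0 := fun p hp ↦ by exact_mod_cast (hS p hp).ne_zero
  rw [← Real.log_lt_iff_lt_exp (mod_cast prod_pos fun p hp ↦ (hS p hp).pos), Nat.cast_prod,
    Real.log_prod hpos]

section AlternatingCount

variable {α : Type*} (s : Finset α) (f : α → ℕ)

theorem support_neg_one_pow_mul_card_filter_subset :
    (Function.support fun j : ℕ ↦ (-1 : ℤ) ^ j * #{x ∈ s | f x = j + 1}) ⊆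
      s.image (f · - 1) := by
  intro j hj
  obtain ⟨x, hx⟩ : ({x ∈ s | f x = j + 1} : Finset α).Nonempty := by
    by_contra h
    rw [not_nonempty_iff_eq_empty] at h
    simp [h] at hj
  rw [mem_filter] at hx
  exact mem_image.mpr ⟨x, hx.1, by omega⟩

theorem finsum_neg_one_pow_mul_card_filter (hf : ∀ x ∈ s, f x ≠ 0) :
    ∑ᶠ j : ℕ, (-1 : ℤ) ^ j * #{x ∈ s | f x = j + 1} = -∑ x ∈ s, (-1 : ℤ) ^ f x := by
  classical
  have hfiber : ∀ j, #{x ∈ s | f x - 1 = j} = #{x ∈ s | f x = j + 1} := fun j ↦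
    congrArg card <| filter_congr fun x hx ↦ by have := hf x hx; omega
  calc ∑ᶠ j : ℕ, (-1 : ℤ) ^ j * #{x ∈ s | f x = j + 1}
      = ∑ j ∈ s.image (f · - 1), #{x ∈ s | f x - 1 = j} • -(-1 : ℤ) ^ (j + 1) := by
        rw [finsum_eq_sum_of_support_subset _ (support_neg_one_pow_mul_card_filter_subset s f)]
        refine sum_congr rfl fun j _ ↦ ?_
        rw [hfiber, nsmul_eq_mul, pow_succ]
        ring
    _ = ∑ x ∈ s, -(-1 : ℤ) ^ (f x - 1 + 1) := (sum_comp (fun j ↦ -(-1 : ℤ) ^ (j + 1)) _).symm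
    _ = -∑ x ∈ s, (-1 : ℤ) ^ f x := by
        rw [← sum_neg_distrib]
        exact sum_congr rfl fun x hx ↦ by rw [Nat.sub_add_cancel (Nat.pos_of_ne_zero (hf x hx))]

end AlternatingCount

noncomputable def squarefreeIco (x : ℝ) : Finset ℕ := {n ∈ Ico 2 ⌈x⌉₊ | Squarefree n}

theorem mem_squarefreeIco {x : ℝ} {n : ℕ} :
    n ∈ squarefreeIco x ↔ 2 ≤ n ∧ (n : ℝ) < x ∧ Squarefree n := by
  simp only [squarefreeIco, mem_filter, mem_Ico, Nat.lt_ceil, and_assoc]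

theorem ncard_setOf_card_eq_sum_log_lt (q : ℝ) {k : ℕ} (hk : k ≠ 0) :
    {S : Finset ℕ | S.card = k ∧ (∀ p ∈ S, p.Prime) ∧ ∑ p ∈ S, Real.log p < q}.ncard =
      #{n ∈ squarefreeIco (Real.exp q) | #n.primeFactors = k} := by
  have hfaces : {S : Finset ℕ | S.card = k ∧ (∀ p ∈ S, p.Prime) ∧ ∑ p ∈ S, Real.log p < q} =
      {S | (∀ p ∈ S, p.Prime) ∧
        (#(∏ p ∈ S, p).primeFactors = k ∧ ((∏ p ∈ S, p : ℕ) : ℝ) < Real.exp q)} := by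
    ext S
    constructor
    · rintro ⟨hcard, hS, hsum⟩
      exact ⟨hS, by rwa [Nat.primeFactors_prod hS],
        (Real.sum_log_lt_iff_prod_lt_exp hS q).mp hsum⟩
    · rintro ⟨hS, hcard, hprod⟩
      exact ⟨by rwa [Nat.primeFactors_prod hS] at hcard, hS,
        (Real.sum_log_lt_iff_prod_lt_exp hS q).mpr hprod⟩
  rw [hfaces, Nat.ncard_setOf_forall_prime (fun n ↦ #n.primeFactors = k ∧ (n : ℝ) < Real.exp q),
    ← Set.ncard_coe_finset]
  congr 1
  ext n
  simp only [coe_filter, mem_squarefreeIco]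
  have h2 : #n.primeFactors = k → 2 ≤ n := fun h ↦
    Nat.nonempty_primeFactors.mp (card_ne_zero.mp (h ▸ hk))
  exact ⟨fun ⟨hsq, hcard, hlt⟩ ↦ ⟨⟨h2 hcard, hlt, hsq⟩, hcard⟩,
    fun ⟨⟨_, hlt, hsq⟩, hcard⟩ ↦ ⟨hsq, hcard, hlt⟩⟩

theorem support_moebius_subset_squarefreeIco (x : ℝ) :
    (Function.support fun n : ℕ ↦ if 2 ≤ n ∧ (n : ℝ) < x then μ n else 0) ⊆ squarefreeIco x := by
  intro n hn
  by_cases h : 2 ≤ n ∧ (n : ℝ) < x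
  · have hμ : μ n ≠ 0 := by simpa [h] using hn
    exact mem_squarefreeIco.mpr ⟨h.1, h.2, moebius_ne_zero_iff_squarefree.mp hμ⟩
  · simp [h] at hn

theorem finsum_moebius_eq_sum_squarefreeIco (x : ℝ) :
    ∑ᶠ n : ℕ, (if 2 ≤ n ∧ (n : ℝ) < x then μ n else 0) =
      ∑ n ∈ squarefreeIco x, (-1 : ℤ) ^ #n.primeFactors := by
  rw [finsum_eq_sum_of_support_subset _ (support_moebius_subset_squarefreeIco x)]
  refine sum_congr rfl fun n hn ↦ ?_
  obtain ⟨h2, hx, hn⟩ := mem_squarefreeIco.mp hn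
  rw [if_pos ⟨h2, hx⟩, Nat.moebius_eq_neg_one_pow_card_primeFactors hn]

theorem euler_char_logprime_complex_general (q : ℝ)
    (c : ℕ → ℕ)
    (hc : ∀ j, c j = {S : Finset ℕ | S.card = j + 1 ∧ (∀ p ∈ S, p.Prime) ∧
      (∑ p ∈ S, Real.log p) < q}.ncard) :
    (Function.support fun j : ℕ => ((-1 : ℤ) ^ j * c j)).Finite ∧
    (Function.support fun n : ℕ =>
      if 2 ≤ n ∧ (n : ℝ) < Real.exp q then μ n else 0).Finite ∧
    (∑ᶠ j : ℕ, (-1 : ℤ) ^ j * c j) =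
      - ∑ᶠ n : ℕ, (if 2 ≤ n ∧ (n : ℝ) < Real.exp q then μ n else 0) := by
  obtain rfl : c = fun j ↦ #{n ∈ squarefreeIco (Real.exp q) | #n.primeFactors = j + 1} :=
    funext fun j ↦ (hc j).trans (ncard_setOf_card_eq_sum_log_lt q j.succ_ne_zero)
  have hcard : ∀ n ∈ squarefreeIco (Real.exp q), #n.primeFactors ≠ 0 := fun n hn ↦
    card_ne_zero.mpr (Nat.nonempty_primeFactors.mpr (mem_squarefreeIco.mp hn).1)
  refine ⟨(finite_toSet _).subset (support_neg_one_pow_mul_card_filter_subset _ _),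
    (finite_toSet _).subset (support_moebius_subset_squarefreeIco _), ?_⟩
  rw [finsum_neg_one_pow_mul_card_filter _ _ hcard, finsum_moebius_eq_sum_squarefreeIco]

/-- For a real quota `q > 2`, the Euler characteristic of the LogPrime quota
complex satisfies `χ(LogPrime(q)) = -∑_{2 ≤ n < e^q} μ(n)`.  Here `c j` is the
number of `(j+1)`-element sets `S` of primes with `∑_{p ∈ S} log p < q`. -/
theorem euler_char_logprime_complex (q : ℝ) (hq : 2 < q)
    (c : ℕ → ℕ)
    (hc : ∀ j, c j = {S : Finset ℕ | S.card = j + 1 ∧ (∀ p ∈ S, p.Prime) ∧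
      (∑ p ∈ S, Real.log p) < q}.ncard) :
    (Function.support fun j : ℕ => ((-1 : ℤ) ^ j * c j)).Finite ∧
    (Function.support fun n : ℕ =>
      if 2 ≤ n ∧ (n : ℝ) < Real.exp q then μ n else 0).Finite ∧
    (∑ᶠ j : ℕ, (-1 : ℤ) ^ j * c j) =
      - ∑ᶠ n : ℕ, (if 2 ≤ n ∧ (n : ℝ) < Real.exp q then μ n else 0) :=
  euler_char_logprime_complex_general q c hc
end

section
/- Let n ≥ 2 be a perfect number, i.e., the sum σ'(n) of the proper divisors of n equals n, and let τ(n) be the number of positive divisors of n. Then the subsets F of the set D of proper divisors of n with 1 ∉ F and n − 1 ≤ ∑_{d∈F} d < n are exactly one: F = D \ {1}, which has cardinality τ(n) − 2. Consequently Div(n) is homotopy equivalent to a single sphere of dimension τ(n) − 3. -/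
/-- If `n ≥ 2` is perfect, then the subsets `F` of the proper divisors of `n`
with `1 ∉ F` and `n - 1 ≤ ∑_{d ∈ F} d < n` are exactly the single set
`D \ {1}` (the proper divisors other than `1`), which has `τ(n) - 2` elements:
hence `Div(n)` is homotopy equivalent to one sphere of dimension `τ(n) - 3`. -/
theorem perfect_div_complex_sphere (n : ℕ) (hn : 2 ≤ n)
    (hperf : ∑ d ∈ n.properDivisors, d = n) :
    (∀ F ⊆ n.properDivisors,
      ((1 ∉ F ∧ n - 1 ≤ ∑ d ∈ F, d ∧ ∑ d ∈ F, d < n) ↔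
        F = n.properDivisors.erase 1)) ∧
    (n.properDivisors.erase 1).card = n.divisors.card - 2 := by
  have h1 : 1 ∈ n.properDivisors := by
    simp [Nat.mem_properDivisors]; omega
  have hsum_erase : ∑ d ∈ n.properDivisors.erase 1, d = n - 1 := by
    have := Finset.add_sum_erase _ id h1
    simp only [id] at this
    omega
  constructor
  · intro F hF
    constructor
    · rintro ⟨h1F, hge, hlt⟩
      have hFsub : F ⊆ n.properDivisors.erase 1 := by
        intro x hx
        exact Finset.mem_erase.mpr ⟨fun h => h1F (h ▸ hx), hF hx⟩
      by_contra hne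
      have hss : F ⊂ n.properDivisors.erase 1 := ⟨hFsub, fun h => hne (Finset.Subset.antisymm hFsub h)⟩
      have : ∑ d ∈ F, d < ∑ d ∈ n.properDivisors.erase 1, d := by
        obtain ⟨x, hx, hxF⟩ := Finset.exists_of_ssubset hss
        have hxpos : 0 < x := Nat.pos_of_mem_properDivisors (Finset.mem_of_mem_erase hx)
        calc ∑ d ∈ F, d < ∑ d ∈ F, d + x := by omega
          _ = ∑ d ∈ insert x F, d := by rw [Finset.sum_insert hxF]; omega
          _ ≤ ∑ d ∈ n.properDivisors.erase 1, d := by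
              apply Finset.sum_le_sum_of_subset
              intro y hy
              rcases Finset.mem_insert.mp hy with h | h
              · exact h ▸ hx
              · exact hFsub h
      omega
    · rintro rfl
      refine ⟨by simp, by omega, by omega⟩
  · have hcard : n.divisors.card = n.properDivisors.card + 1 := by
      rw [← Nat.cons_self_properDivisors (by omega : n ≠ 0), Finset.card_cons]
    rw [Finset.card_erase_of_mem h1]
    omega
end

section
/- Let (ν_i)_{i≥1} be a nondecreasing sequence of positive integers such that for every N only finitely many ν_i are below N. Then the formal power series identity holds: ∏_{i=1}^∞ (1 − x^{ν_i}) = 1 − (1 − x) ∑_{j=ν_1}^∞ χ[j+1] x^j, where χ[q] denotes the Euler characteristic (alternating sum ∑_{j}(−1)^j c_j(q), with c_j(q) the number of (j+1)-element index sets J with ∑_{i∈J} ν_i < q) of the scalar quota complex with weights ν_i and quota q. -/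
open scoped Classical

/-!
Grouping index sets by their total weight, the partial sum `∑_{j<q} A j` is the signed count
`∑ (-1)^|S|` over the index sets `S` of weight below `q`. The empty set contributes `1` and the
faces of the quota complex contribute `-χ q`, so `χ q = 1 - ∑_{j<q} A j` for `q ≥ 1`.
Multiplying the series of partial sums by `1 - X` recovers `∑ A j X^j`. The truncation at
`j ≥ ν 1` is harmless: `ν 1` is the smallest weight, so for `q ≤ ν 1` the complex is empty
and `χ q = 0`.
-/

open PowerSeries Finset

namespace PowerSeries

variable {R : Type*} [CommRing R]

theorem one_sub_X_mul_mk_sum_range (a : ℕ → R) :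
    (1 - X) * mk (fun n => ∑ i ∈ range (n + 1), a i) = mk a := by
  have hpartial : mk (fun n => ∑ i ∈ range (n + 1), a i) = mk a * mk 1 := by
    ext n
    simp [coeff_mul, Nat.sum_antidiagonal_eq_sum_range_succ_mk]
  rw [hpartial, mul_left_comm, mul_comm _ (mk 1), mk_one_mul_one_sub_eq_one, mul_one]

theorem one_sub_one_sub_X_mul_mk_one_sub_sum_range (a : ℕ → R) :
    1 - (1 - X) * mk (fun n => 1 - ∑ i ∈ range (n + 1), a i) = mk a := by
  have hsplit : mk (fun n => 1 - ∑ i ∈ range (n + 1), a i) =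
      mk 1 - mk (fun n => ∑ i ∈ range (n + 1), a i) := by
    ext n
    simp
  rw [hsplit, mul_sub, one_sub_X_mul_mk_sum_range, mul_comm, mk_one_mul_one_sub_eq_one,
    sub_sub_cancel]

end PowerSeries

namespace QuotaComplex

variable {ν : ℕ → ℕ} {q : ℕ}

theorem subset_toFinset_of_sum_lt (hfin : {i : ℕ | 1 ≤ i ∧ ν i < q}.Finite) {S : Finset ℕ}
    (hS : ∀ i ∈ S, 1 ≤ i) (hlt : ∑ i ∈ S, ν i < q) : S ⊆ hfin.toFinset := fun i hi =>
  hfin.mem_toFinset.2 ⟨hS i hi, (single_le_sum (fun _ _ => Nat.zero_le _) hi).trans_lt hlt⟩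

theorem support_subset_powerset {M : Type*} [Zero M]
    (hfin : {i : ℕ | 1 ≤ i ∧ ν i < q}.Finite) {f : Finset ℕ → M}
    (hf : ∀ S, f S ≠ 0 → (∀ i ∈ S, 1 ≤ i) ∧ ∑ i ∈ S, ν i < q) :
    Function.support f ⊆ ↑hfin.toFinset.powerset := fun S hS =>
  mem_powerset.2 (subset_toFinset_of_sum_lt hfin (hf S hS).1 (hf S hS).2)

theorem finsum_eq_sum_powerset {M : Type*} [AddCommMonoid M]
    (hfin : {i : ℕ | 1 ≤ i ∧ ν i < q}.Finite) {f : Finset ℕ → M}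
    (hf : ∀ S, f S ≠ 0 → (∀ i ∈ S, 1 ≤ i) ∧ ∑ i ∈ S, ν i < q) :
    ∑ᶠ S, f S = ∑ S ∈ hfin.toFinset.powerset, f S :=
  finsum_eq_sum_of_support_subset f (support_subset_powerset hfin hf)

theorem sum_range_signedCount_eq (hfin : {i : ℕ | 1 ≤ i ∧ ν i < q}.Finite) :
    ∑ j ∈ range q, (∑ᶠ S : Finset ℕ,
      if (∀ i ∈ S, 1 ≤ i) ∧ ∑ i ∈ S, ν i = j then (-1 : ℤ) ^ S.card else 0) =
    ∑ᶠ S : Finset ℕ,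
      if (∀ i ∈ S, 1 ≤ i) ∧ ∑ i ∈ S, ν i < q then (-1 : ℤ) ^ S.card else 0 := by
  have hweight : ∀ j ∈ range q, (∑ᶠ S : Finset ℕ,
      if (∀ i ∈ S, 1 ≤ i) ∧ ∑ i ∈ S, ν i = j then (-1 : ℤ) ^ S.card else 0) =
      ∑ S ∈ hfin.toFinset.powerset,
        if (∀ i ∈ S, 1 ≤ i) ∧ ∑ i ∈ S, ν i = j then (-1 : ℤ) ^ S.card else 0 := by
    intro j hj
    refine finsum_eq_sum_powerset hfin fun S hS => ?_
    obtain ⟨hpos, rfl⟩ := (ite_ne_right_iff.1 hS).1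
    exact ⟨hpos, mem_range.1 hj⟩
  rw [sum_congr rfl hweight, sum_comm, finsum_eq_sum_powerset hfin fun S hS =>
    (ite_ne_right_iff.1 hS).1]
  refine sum_congr rfl fun S _ => ?_
  by_cases hpos : ∀ i ∈ S, 1 ≤ i
  · simp only [and_iff_right hpos, sum_ite_eq, mem_range]
  · simp only [hpos, false_and, if_false, sum_const_zero]

theorem euler_eq_one_sub (hfin : {i : ℕ | 1 ≤ i ∧ ν i < q}.Finite) (hq : 1 ≤ q) :
    (∑ᶠ S : Finset ℕ, if S.Nonempty ∧ (∀ i ∈ S, 1 ≤ i) ∧ ∑ i ∈ S, ν i < q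
      then (-1 : ℤ) ^ (S.card + 1) else 0) =
    1 - ∑ᶠ S : Finset ℕ,
      if (∀ i ∈ S, 1 ≤ i) ∧ ∑ i ∈ S, ν i < q then (-1 : ℤ) ^ S.card else 0 := by
  rw [finsum_eq_sum_powerset hfin fun S hS => (ite_ne_right_iff.1 hS).1.2,
    finsum_eq_sum_powerset hfin fun S hS => (ite_ne_right_iff.1 hS).1,
    eq_sub_iff_add_eq, ← sum_add_distrib]
  have hterm : ∀ S : Finset ℕ,
      ((if S.Nonempty ∧ (∀ i ∈ S, 1 ≤ i) ∧ ∑ i ∈ S, ν i < q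
        then (-1 : ℤ) ^ (S.card + 1) else 0) +
      if (∀ i ∈ S, 1 ≤ i) ∧ ∑ i ∈ S, ν i < q then (-1 : ℤ) ^ S.card else 0) =
      if S = ∅ then 1 else 0 := by
    intro S
    rcases S.eq_empty_or_nonempty with rfl | hne
    · simp [Nat.one_le_iff_ne_zero.1 hq]
    · simp only [hne, true_and, hne.ne_empty, if_false]
      split_ifs <;> ring
  simp only [hterm, sum_ite_eq', empty_mem_powerset, if_true]

theorem nu_one_le_sum (hmono : ∀ i j, 1 ≤ i → i ≤ j → ν i ≤ ν j) {S : Finset ℕ}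
    (hne : S.Nonempty) (hS : ∀ i ∈ S, 1 ≤ i) : ν 1 ≤ ∑ i ∈ S, ν i :=
  let ⟨i, hi⟩ := hne
  (hmono 1 i le_rfl (hS i hi)).trans (single_le_sum (fun _ _ => Nat.zero_le _) hi)

theorem euler_eq_zero_of_le_nu_one (hmono : ∀ i j, 1 ≤ i → i ≤ j → ν i ≤ ν j) (hq : q ≤ ν 1) :
    (∑ᶠ S : Finset ℕ, if S.Nonempty ∧ (∀ i ∈ S, 1 ≤ i) ∧ ∑ i ∈ S, ν i < q
      then (-1 : ℤ) ^ (S.card + 1) else 0) = 0 :=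
  finsum_eq_zero_of_forall_eq_zero fun _ =>
    if_neg fun ⟨hne, hS, hlt⟩ => (nu_one_le_sum hmono hne hS).not_gt (hlt.trans_le hq)

end QuotaComplex

open QuotaComplex

theorem quota_euler_generating_function_general
    (ν : ℕ → ℕ)
    (hmono : ∀ i j, 1 ≤ i → i ≤ j → ν i ≤ ν j)
    (hfin : ∀ N : ℕ, {i : ℕ | 1 ≤ i ∧ ν i < N}.Finite)
    (A : ℕ → ℤ)
    (hA : ∀ j, A j = ∑ᶠ S : Finset ℕ,
      if (∀ i ∈ S, 1 ≤ i) ∧ ∑ i ∈ S, ν i = j then (-1 : ℤ) ^ S.card else 0)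
    (χ : ℕ → ℤ)
    (hχ : ∀ q, χ q = ∑ᶠ S : Finset ℕ,
      if S.Nonempty ∧ (∀ i ∈ S, 1 ≤ i) ∧ ∑ i ∈ S, ν i < q
      then (-1 : ℤ) ^ (S.card + 1) else 0) :
    (∀ j, (Function.support fun S : Finset ℕ =>
      if (∀ i ∈ S, 1 ≤ i) ∧ ∑ i ∈ S, ν i = j then (-1 : ℤ) ^ S.card else 0).Finite) ∧
    PowerSeries.mk A =
      1 - (1 - PowerSeries.X) *
        PowerSeries.mk (fun j => if ν 1 ≤ j then χ (j + 1) else 0) := by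
  refine ⟨fun j => ((hfin (j + 1)).toFinset.powerset.finite_toSet).subset
    (support_subset_powerset (hfin (j + 1)) fun S hS => ?_), ?_⟩
  · obtain ⟨hpos, rfl⟩ := (ite_ne_right_iff.1 hS).1
    exact ⟨hpos, Nat.lt_succ_self _⟩
  have hχA : ∀ j, χ (j + 1) = 1 - ∑ i ∈ range (j + 1), A i := fun j => by
    simp only [hχ, hA, euler_eq_one_sub (hfin (j + 1)) j.succ_pos,
      sum_range_signedCount_eq (hfin (j + 1))]
  have htrunc : (fun j => if ν 1 ≤ j then χ (j + 1) else 0) = fun j => χ (j + 1) := by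
    funext j
    split_ifs with hj
    · rfl
    · rw [hχ, euler_eq_zero_of_le_nu_one hmono (by omega)]
  rw [htrunc, funext hχA, one_sub_one_sub_X_mul_mk_one_sub_sum_range]

/-- Generating function for Euler characteristics of a scalar quota complex with
nondecreasing positive integer weights `ν₁ ≤ ν₂ ≤ …` (indices `i ≥ 1`), only
finitely many below any bound.  The coefficient `A j` of the formal power series
`∏_{i≥1} (1 - x^{ν i})` is `∑_S (-1)^{|S|}` over index sets `S` with
`∑_{i∈S} ν i = j`, and `χ q` is the Euler characteristic of the quota complex
with quota `q`.  Then `∏_{i≥1}(1 - x^{ν i}) = 1 - (1-x) ∑_{j≥ν₁} χ(j+1) x^j`. -/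
theorem quota_euler_generating_function
    (ν : ℕ → ℕ) (hν1 : ∀ i, 1 ≤ i → 1 ≤ ν i)
    (hmono : ∀ i j, 1 ≤ i → i ≤ j → ν i ≤ ν j)
    (hfin : ∀ N : ℕ, {i : ℕ | 1 ≤ i ∧ ν i < N}.Finite)
    (A : ℕ → ℤ)
    (hA : ∀ j, A j = ∑ᶠ S : Finset ℕ,
      if (∀ i ∈ S, 1 ≤ i) ∧ ∑ i ∈ S, ν i = j then (-1 : ℤ) ^ S.card else 0)
    (χ : ℕ → ℤ)
    (hχ : ∀ q, χ q = ∑ᶠ S : Finset ℕ,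
      if S.Nonempty ∧ (∀ i ∈ S, 1 ≤ i) ∧ ∑ i ∈ S, ν i < q
      then (-1 : ℤ) ^ (S.card + 1) else 0) :
    (∀ j, (Function.support fun S : Finset ℕ =>
      if (∀ i ∈ S, 1 ≤ i) ∧ ∑ i ∈ S, ν i = j then (-1 : ℤ) ^ S.card else 0).Finite) ∧
    PowerSeries.mk A =
      1 - (1 - PowerSeries.X) *
        PowerSeries.mk (fun j => if ν 1 ≤ j then χ (j + 1) else 0) :=
  quota_euler_generating_function_general ν hmono hfin A hA χ hχ
end
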